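/- For every λ ∈ [0,1], the two-qubit state ψ_λ = v_λ v_λᴴ with v_λ = √λ |00⟩ + √(1−λ) |11⟩ has stabilizer 2-Rényi entropy M₂(ψ_λ) = −log₂( 4(λ−1)λ(1−2λ)² + 1 ). -/

import Mathlib

noncomputable section
open Matrix Kronecker

/-- The four single-qubit Pauli matrices I, X, Y, Z. -/
def pauli : Fin 4 → Matrix (Fin 2) (Fin 2) ℂ :=
  ![1, !![0, 1; 1, 0], !![0, -Complex.I; Complex.I, 0], !![1, 0; 0, -1]]

/-- Two-qubit Pauli strings σ₁ ⊗ σ₂. -/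
def pauli2 (a : Fin 4 × Fin 4) : Matrix (Fin 2 × Fin 2) (Fin 2 × Fin 2) ℂ :=
  pauli a.1 ⊗ₖ pauli a.2

/-- Rank-one density matrix v vᴴ. -/
def dm {ι : Type*} (v : ι → ℂ) : Matrix ι ι ℂ := Matrix.vecMulVec v (star v)

/-- Stabilizer 2-Rényi entropy of a two-qubit state. -/
def M2two (ψ : Matrix (Fin 2 × Fin 2) (Fin 2 × Fin 2) ℂ) : ℝ :=
  - Real.logb 2 ((1 / 4) * ∑ a : Fin 4 × Fin 4, ‖(pauli2 a * ψ).trace‖ ^ 4)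

/-- The Schmidt state √λ |00⟩ + √(1−λ) |11⟩. -/
def vlam (l : ℝ) : Fin 2 × Fin 2 → ℂ := fun p =>
  if p = ((0 : Fin 2), (0 : Fin 2)) then (Real.sqrt l : ℂ)
  else if p = ((1 : Fin 2), (1 : Fin 2)) then (Real.sqrt (1 - l) : ℂ) else 0

/-! Only Pauli strings that are diagonal or flip both qubits can have a nonzero expectation in
`a|00⟩ + b|11⟩` (`a`, `b` real), and of the latter `XY` and `YX` cancel. What remains is
`⟨II⟩ = ⟨ZZ⟩ = a² + b²`, `⟨IZ⟩ = ⟨ZI⟩ = a² - b²` and `⟨XX⟩ = -⟨YY⟩ = 2ab`; summing their fourth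
powers and substituting `a² = λ`, `b² = 1 - λ` gives the closed form. -/

def schmidtVec (a b : ℝ) : Fin 2 × Fin 2 → ℂ := fun p =>
  if p = ((0 : Fin 2), (0 : Fin 2)) then (a : ℂ)
  else if p = ((1 : Fin 2), (1 : Fin 2)) then (b : ℂ) else 0

theorem trace_kronecker_mul_dm_schmidtVec (σ τ : Matrix (Fin 2) (Fin 2) ℂ) (a b : ℝ) :
    (σ ⊗ₖ τ * dm (schmidtVec a b)).trace =
      a ^ 2 * (σ 0 0 * τ 0 0) + a * b * (σ 0 1 * τ 0 1 + σ 1 0 * τ 1 0) +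
        b ^ 2 * (σ 1 1 * τ 1 1) := by
  simp [trace, mul_apply, dm, schmidtVec, Fintype.sum_prod_type, Fin.sum_univ_two, vecMulVec_apply]
  ring

/-- Entry `(s, t)` is the expectation of `pauli s ⊗ pauli t` in `schmidtVec a b`. -/
def schmidtCorrelations (a b : ℝ) : Matrix (Fin 4) (Fin 4) ℝ :=
  !![a ^ 2 + b ^ 2, 0, 0, a ^ 2 - b ^ 2;
     0, 2 * a * b, 0, 0;
     0, 0, -(2 * a * b), 0;
     a ^ 2 - b ^ 2, 0, 0, a ^ 2 + b ^ 2]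

theorem trace_pauli2_mul_dm_schmidtVec (a b : ℝ) (x : Fin 4 × Fin 4) :
    (pauli2 x * dm (schmidtVec a b)).trace = schmidtCorrelations a b x.1 x.2 := by
  obtain ⟨s, t⟩ := x
  rw [pauli2, trace_kronecker_mul_dm_schmidtVec]
  fin_cases s <;> fin_cases t <;> simp [pauli, schmidtCorrelations] <;> ring

theorem sum_norm_trace_pauli2_mul_dm_schmidtVec_pow_four (a b : ℝ) :
    ∑ x : Fin 4 × Fin 4, ‖(pauli2 x * dm (schmidtVec a b)).trace‖ ^ 4 =
      2 * ((a ^ 2 + b ^ 2) ^ 4 + (a ^ 2 - b ^ 2) ^ 4 + 16 * (a ^ 2 * b ^ 2) ^ 2) := by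
  simp only [trace_pauli2_mul_dm_schmidtVec, Complex.norm_real, Real.norm_eq_abs,
    Even.pow_abs (by decide : Even 4), Fintype.sum_prod_type, Fin.sum_univ_four,
    schmidtCorrelations, of_apply, cons_val', cons_val_zero, cons_val_fin_one, cons_val_one,
    cons_val]
  ring

theorem stabilizer_entropy_schmidt_state (l : ℝ) (hl : l ∈ Set.Icc (0 : ℝ) 1) :
    M2two (dm (vlam l)) = - Real.logb 2 (4 * (l - 1) * l * (1 - 2 * l) ^ 2 + 1) := by
  obtain ⟨hl0, hl1⟩ := hl
  have hvlam : vlam l = schmidtVec √l √(1 - l) := rfl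
  rw [M2two, hvlam, sum_norm_trace_pauli2_mul_dm_schmidtVec_pow_four,
    Real.sq_sqrt hl0, Real.sq_sqrt (sub_nonneg.2 hl1)]
  congr 2
  ring
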